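/- arXiv:math/9907064 — 2 statements merged into one kernel-verified Lean document; each statement's English description precedes it below -/
import Mathlib

section
/- If n is a natural number with n ≥ 10 and every natural number m whose list of base-10 digits is a permutation of the list of base-10 digits of n (equivalently, whose digit multiset equals that of n and which has the same number of digits as n) is prime, then every base-10 digit of n belongs to {1, 3, 7, 9}. -/
/-- If `n ≥ 10` and every natural number whose list of base-10 digits is a
permutation of the list of base-10 digits of `n` is prime, then every
base-10 digit of `n` is one of 1, 3, 7, 9. -/
theorem stmt_0 (n : ℕ) (hn : 10 ≤ n)
    (h : ∀ m : ℕ, (Nat.digits 10 m).Perm (Nat.digits 10 n) → Nat.Prime m) :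
    ∀ d ∈ Nat.digits 10 n, d = 1 ∨ d = 3 ∨ d = 7 ∨ d = 9 := by
  intro d hd
  by_contra hcon
  push_neg at hcon
  obtain ⟨h1, h3, h7, h9⟩ := hcon
  have hn0 : n ≠ 0 := by omega
  have hd10 : d < 10 := Nat.digits_lt_base (by norm_num) hd
  have hnp : n.Prime := h n (List.Perm.refl _)
  set D := Nat.digits 10 n with hD
  have hlen : 2 ≤ D.length := by
    have hlog : 1 ≤ Nat.log 10 n :=
      (Nat.le_log_iff_pow_le (by norm_num) hn0).mpr (by simpa using hn)
    rw [hD, Nat.digits_len 10 n (by norm_num) hn0]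
    omega
  -- the key divisibility fact about d
  have hdvd : 2 ∣ d ∨ d = 5 := by interval_cases d <;> omega
  by_cases hz : ∀ x ∈ D.erase d, x = 0
  · -- degenerate case: n's units digit is d or 0, so 2 or 5 divides n
    have hhead : D = n % 10 :: Nat.digits 10 (n / 10) := by
      rw [hD, Nat.digits_def' (by norm_num : 1 < 10) (by omega)]
    have hmem : n % 10 ∈ D := by rw [hhead]; exact List.mem_cons_self
    have hcases : n % 10 = d ∨ n % 10 = 0 := by
      by_cases he : n % 10 = d
      · exact Or.inl he
      · exact Or.inr (hz _ (List.mem_erase_of_ne he |>.mpr hmem))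
    rcases hdvd with h2 | h5
    · have : 2 ∣ n := by
        have : n % 2 = n % 10 % 2 := (Nat.mod_mod_of_dvd n (by norm_num)).symm
        omega
      rcases Nat.Prime.eq_one_or_self_of_dvd hnp 2 this with h' | h' <;> omega
    · have : 5 ∣ n := by
        have : n % 5 = n % 10 % 5 := (Nat.mod_mod_of_dvd n (by norm_num)).symm
        omega
      rcases (Nat.Prime.eq_one_or_self_of_dvd hnp 5 this) with h' | h' <;> omega
  · push_neg at hz
    obtain ⟨x, hx, hx0⟩ := hz
    -- build a rearrangement with d as units digit and x as leading digit
    set L : List ℕ := d :: (((D.erase d).erase x) ++ [x]) with hL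
    have hperm : L.Perm D := by
      have p1 : (((D.erase d).erase x) ++ [x]).Perm (x :: ((D.erase d).erase x)) :=
        List.perm_append_singleton _ _
      have p2 : (x :: ((D.erase d).erase x)).Perm (D.erase d) :=
        (List.perm_cons_erase hx).symm
      exact ((p1.trans p2).cons d).trans (List.perm_cons_erase hd).symm
    have hlt : ∀ l ∈ L, l < 10 := fun l hl =>
      Nat.digits_lt_base (by norm_num) (hperm.mem_iff.mp hl)
    have hlast : ∀ hne : L ≠ [], L.getLast hne ≠ 0 := by
      intro hne
      have hx' : L.getLast hne = x := List.getLast_concat (l := d :: ((D.erase d).erase x))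
      rw [hx']
      exact hx0
    set m := Nat.ofDigits 10 L with hm
    have hdig : Nat.digits 10 m = L := Nat.digits_ofDigits 10 (by norm_num) L hlt hlast
    have hmp : m.Prime := h m (by rw [hdig]; exact hperm)
    have hm10 : 10 ≤ m := by
      by_contra hlt10
      push_neg at hlt10
      have : (Nat.digits 10 m).length ≤ 1 := by
        interval_cases m <;> simp [Nat.digits_def']
      rw [hdig] at this
      have := hperm.length_eq
      omega
    have hmd : m % 10 = d := by
      have : m = d + 10 * Nat.ofDigits 10 (((D.erase d).erase x) ++ [x]) := by
        rw [hm, hL]; simp [Nat.ofDigits_cons]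
      omega
    rcases hdvd with h2 | h5
    · have : 2 ∣ m := by
        have : m % 2 = m % 10 % 2 := (Nat.mod_mod_of_dvd m (by norm_num)).symm
        omega
      rcases Nat.Prime.eq_one_or_self_of_dvd hmp 2 this with h' | h' <;> omega
    · have : 5 ∣ m := by
        have : m % 5 = m % 10 % 5 := (Nat.mod_mod_of_dvd m (by norm_num)).symm
        omega
      rcases Nat.Prime.eq_one_or_self_of_dvd hmp 5 this with h' | h' <;> omega
end

section
/- The multiset {1,3,7,9,9} has exactly 29 prime 5-digit arrangements among its 60 arrangements, and this is the maximum number of prime arrangements over all multisets of five digits all lying in {1, 3, 7, 9}. -/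
/-- The number of `N`-digit arrangements of the digit multiset `S`. -/
def arrCount (N : ℕ) (S : Multiset ℕ) : ℕ :=
  ((Finset.Ico (10 ^ (N - 1)) (10 ^ N)).filter
    (fun m => (Nat.digits 10 m : Multiset ℕ) = S)).card

/-- The number of prime `N`-digit arrangements of the digit multiset `S`. -/
def primeArrCount (N : ℕ) (S : Multiset ℕ) : ℕ :=
  ((Finset.Ico (10 ^ (N - 1)) (10 ^ N)).filter
    (fun m => (Nat.digits 10 m : Multiset ℕ) = S ∧ Nat.Prime m)).card

/-- Kernel-friendly primality test for numbers below `317^2 = 100489`. -/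
def isPrimeAux (n : ℕ) : Bool :=
  decide (2 ≤ n) && (List.range' 2 315).all (fun m => decide (n < m * m) || decide (¬ m ∣ n))

lemma isPrimeAux_iff {n : ℕ} (hn : n < 100489) : Nat.Prime n ↔ isPrimeAux n = true := by
  rw [Nat.prime_def_le_sqrt, isPrimeAux]
  simp only [Bool.and_eq_true, List.all_eq_true, Bool.or_eq_true, decide_eq_true_eq,
    List.mem_range'_1]
  constructor
  · rintro ⟨h2, h⟩
    refine ⟨h2, fun m hm => ?_⟩
    by_cases hms : m ≤ Nat.sqrt n
    · exact Or.inr (h m (by omega) hms)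
    · exact Or.inl (by have := Nat.sqrt_lt'.mp (by omega : Nat.sqrt n < m); rw [pow_two] at this; omega)
  · rintro ⟨h2, h⟩
    refine ⟨h2, fun m hm hms => ?_⟩
    have hmm : m * m ≤ n := by have := Nat.le_sqrt'.mp hms; rw [pow_two] at this; omega
    have hm317 : m < 317 := by
      by_contra hc
      have : 317 * 317 ≤ m * m := Nat.mul_le_mul (by omega) (by omega)
      omega
    rcases h m ⟨hm, by omega⟩ with h' | h'
    · omega
    · exact h'

lemma arr_filter_eq (l : List ℕ) (h5 : l.length = 5) (hd : ∀ d ∈ l, d ≠ 0 ∧ d < 10) :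
    (Finset.Ico (10 ^ (5 - 1)) (10 ^ 5)).filter (fun m => (Nat.digits 10 m : Multiset ℕ) = ↑l)
      = (l.permutations'.map (Nat.ofDigits 10)).toFinset := by
  ext m
  simp only [Finset.mem_filter, Finset.mem_Ico, List.mem_toFinset, List.mem_map,
    List.mem_permutations', Multiset.coe_eq_coe]
  constructor
  · rintro ⟨-, hperm⟩
    exact ⟨Nat.digits 10 m, hperm, Nat.ofDigits_digits 10 m⟩
  · rintro ⟨p, hp, rfl⟩
    have hpl : p.length = 5 := hp.length_eq.trans h5
    have hdp : ∀ d ∈ p, d ≠ 0 ∧ d < 10 := fun d hdm => hd d (hp.mem_iff.mp hdm)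
    have hne : p ≠ [] := by intro h; simp [h] at hpl
    have hdig : Nat.digits 10 (Nat.ofDigits 10 p) = p :=
      Nat.digits_ofDigits 10 (by norm_num) p (fun x hx => (hdp x hx).2)
        (fun _ => (hdp _ (List.getLast_mem hne)).1)
    refine ⟨⟨?_, ?_⟩, by rw [hdig]; exact hp⟩
    · have hm0 : Nat.ofDigits 10 p ≠ 0 := by
        intro h0
        rw [h0] at hdig
        simp only [Nat.digits_zero] at hdig
        exact hne hdig.symm
      have h1 := Nat.base_pow_length_digits_le 10 (Nat.ofDigits 10 p) (by norm_num) hm0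
      rw [hdig, hpl] at h1
      omega
    · have h2 := Nat.lt_base_pow_length_digits (b := 10) (m := Nat.ofDigits 10 p) (by norm_num)
      rw [hdig, hpl] at h2
      exact h2

lemma arrCount_eq (l : List ℕ) (h5 : l.length = 5) (hd : ∀ d ∈ l, d ≠ 0 ∧ d < 10) :
    arrCount 5 ↑l = (l.permutations'.map (Nat.ofDigits 10)).toFinset.card := by
  rw [arrCount, arr_filter_eq l h5 hd]

lemma primeArrCount_eq (l : List ℕ) (h5 : l.length = 5) (hd : ∀ d ∈ l, d ≠ 0 ∧ d < 10) :
    primeArrCount 5 ↑l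
      = ((l.permutations'.map (Nat.ofDigits 10)).toFinset.filter
          (fun n => isPrimeAux n = true)).card := by
  rw [primeArrCount]
  have : ((Finset.Ico (10 ^ (5 - 1)) (10 ^ 5)).filter
      (fun m => (Nat.digits 10 m : Multiset ℕ) = ↑l ∧ Nat.Prime m))
      = ((Finset.Ico (10 ^ (5 - 1)) (10 ^ 5)).filter
          (fun m => (Nat.digits 10 m : Multiset ℕ) = ↑l)).filter
          (fun n => isPrimeAux n = true) := by
    rw [Finset.filter_filter]
    apply Finset.filter_congr
    intro x hx
    simp only [Finset.mem_Ico] at hx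
    norm_num at hx
    constructor
    · rintro ⟨h1, h2⟩
      exact ⟨h1, (isPrimeAux_iff (by omega)).mp h2⟩
    · rintro ⟨h1, h2⟩
      exact ⟨h1, (isPrimeAux_iff (by omega)).mpr h2⟩
  rw [this, arr_filter_eq l h5 hd]

lemma primeArrCount_le (l : List ℕ) (h5 : l.length = 5) (hd : ∀ d ∈ l, d ≠ 0 ∧ d < 10)
    (h : ((l.permutations'.map (Nat.ofDigits 10)).toFinset.filter
        (fun n => isPrimeAux n = true)).card ≤ 29) :
    primeArrCount 5 ↑l ≤ 29 := by
  rw [primeArrCount_eq l h5 hd]; exact h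

lemma decompose (S : Multiset ℕ) (hcard : Multiset.card S = 5)
    (hmem : ∀ d ∈ S, d = 1 ∨ d = 3 ∨ d = 7 ∨ d = 9) :
    ∃ a b c d : ℕ, a + b + c + d = 5 ∧
      S = ((List.replicate a 1 ++ List.replicate b 3 ++ List.replicate c 7
          ++ List.replicate d 9 : List ℕ) : Multiset ℕ) := by
  have key0 : S = Multiset.replicate (S.count 1) 1 + Multiset.replicate (S.count 3) 3
      + Multiset.replicate (S.count 7) 7 + Multiset.replicate (S.count 9) 9 := by
    ext x
    simp only [Multiset.count_add, Multiset.count_replicate]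
    by_cases h1 : x = 1
    · subst h1; simp
    by_cases h3 : x = 3
    · subst h3; simp
    by_cases h7 : x = 7
    · subst h7; simp
    by_cases h9 : x = 9
    · subst h9; simp
    have hx : x ∉ S := fun hxS => by rcases hmem x hxS with h | h | h | h <;> contradiction
    rw [Multiset.count_eq_zero.mpr hx, if_neg (fun h : (1:ℕ) = x => h1 h.symm),
      if_neg (fun h : (3:ℕ) = x => h3 h.symm), if_neg (fun h : (7:ℕ) = x => h7 h.symm),
      if_neg (fun h : (9:ℕ) = x => h9 h.symm)]
  have hsum : S.count 1 + S.count 3 + S.count 7 + S.count 9 = 5 := by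
    have := congrArg Multiset.card key0
    simp [Multiset.card_replicate, hcard] at this
    omega
  refine ⟨S.count 1, S.count 3, S.count 7, S.count 9, hsum, ?_⟩
  conv_lhs => rw [key0]
  simp [← Multiset.coe_replicate, ← Multiset.coe_add, add_assoc]

set_option maxRecDepth 1000000 in
set_option maxHeartbeats 2000000 in
/-- The multiset `{1,3,7,9,9}` has exactly 29 prime 5-digit arrangements among
its 60 arrangements, the maximum over all multisets of five digits all lying in
{1, 3, 7, 9}. -/
theorem stmt_15 :
    primeArrCount 5 {1, 3, 7, 9, 9} = 29 ∧ arrCount 5 {1, 3, 7, 9, 9} = 60 ∧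
    (∀ S : Multiset ℕ, Multiset.card S = 5 →
      (∀ d ∈ S, d = 1 ∨ d = 3 ∨ d = 7 ∨ d = 9) → primeArrCount 5 S ≤ 29) := by
  refine ⟨?_, ?_, ?_⟩
  · show primeArrCount 5 (↑([1, 3, 7, 9, 9] : List ℕ)) = 29
    rw [primeArrCount_eq _ (by decide) (by decide)]
    decide
  · show arrCount 5 (↑([1, 3, 7, 9, 9] : List ℕ)) = 60
    rw [arrCount_eq _ (by decide) (by decide)]
    decide
  · intro S hcard hmem
    obtain ⟨a, b, c, d, hsum, key⟩ := decompose S hcard hmem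
    rw [key]
    clear key hcard hmem
    have ha : a ≤ 5 := by omega
    interval_cases a <;>
      [skip; skip; skip; skip; skip; skip] <;>
      (have hb : b ≤ 5 := by omega) <;> interval_cases b <;>
      (first | omega | ((have hc : c ≤ 5 := by omega) <;> interval_cases c <;>
        (first | omega | ((have hd2 : d ≤ 5 := by omega) <;> interval_cases d <;>
          (first | omega |
            exact primeArrCount_le _ (by decide) (by decide) (by decide))))))
end
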